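/- Let (X, 𝒪_n) be an operator space and let 𝒲_n be any numerical radius norm affiliated with (X, 𝒪_n). Then 𝒲_n(x) ≤ 𝒲_max(x) for every n ≥ 1 and every x ∈ M_n(X); that is, 𝒲_max is the maximal numerical radius norm affiliated with (X, 𝒪_n). -/

import Mathlib

open scoped ComplexOrder Matrix ENNReal TensorProduct

universe u v

noncomputable section

/-- The block-diagonal sum `x ⊕ y` of two square matrices. -/
def blockDiag {X : Type*} [Zero X] {m n : ℕ} (x : Matrix (Fin m) (Fin m) X)
    (y : Matrix (Fin n) (Fin n) X) : Matrix (Fin (m + n)) (Fin (m + n)) X :=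
  Matrix.submatrix (Matrix.fromBlocks x 0 0 y) finSumFinEquiv.symm finSumFinEquiv.symm

/-- The block matrix `[[0, x], [0, 0]]` with `x` in the upper-right corner. -/
def cornerBlock {X : Type*} [Zero X] {n : ℕ} (x : Matrix (Fin n) (Fin n) X) :
    Matrix (Fin (n + n)) (Fin (n + n)) X :=
  Matrix.submatrix (Matrix.fromBlocks 0 x 0 0) finSumFinEquiv.symm finSumFinEquiv.symm

/-- Multiplication `α x` of a scalar matrix with a matrix over a ℂ-module. -/
def scalarMulLeft {X : Type*} [AddCommMonoid X] [Module ℂ X] {m n k : ℕ}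
    (α : Matrix (Fin m) (Fin n) ℂ) (x : Matrix (Fin n) (Fin k) X) :
    Matrix (Fin m) (Fin k) X :=
  Matrix.of fun i j => ∑ l, α i l • x l j

/-- Multiplication `x β` of a matrix over a ℂ-module with a scalar matrix. -/
def scalarMulRight {X : Type*} [AddCommMonoid X] [Module ℂ X] {m n k : ℕ}
    (x : Matrix (Fin m) (Fin n) X) (β : Matrix (Fin n) (Fin k) ℂ) :
    Matrix (Fin m) (Fin k) X :=
  Matrix.of fun i j => ∑ l, β l j • x i l

/-- Operator norm of a rectangular complex matrix, as an operator ℓ²(Fin n) → ℓ²(Fin m). -/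
def matOpNorm {m n : ℕ} (α : Matrix (Fin m) (Fin n) ℂ) : ℝ :=
  ‖LinearMap.toContinuousLinearMap (Matrix.toEuclideanLin α)‖

/-- The numerical radius of a bounded operator on a complex inner product space. -/
def numRadius {H : Type*} [NormedAddCommGroup H] [InnerProductSpace ℂ H]
    (a : H →L[ℂ] H) : ℝ :=
  ⨆ ξ : {ξ : H // ‖ξ‖ ≤ 1}, ‖(inner ℂ (ξ : H) (a ξ) : ℂ)‖

/-- The bounded operator `Hⁿ → Hᵐ` induced by an `m × n` matrix of bounded operators,
where `Hⁿ` carries the ℓ²-direct sum structure. -/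
def matOpRect {H : Type*} [NormedAddCommGroup H] [InnerProductSpace ℂ H] {m n : ℕ}
    (a : Matrix (Fin m) (Fin n) (H →L[ℂ] H)) :
    (PiLp 2 fun _ : Fin n => H) →L[ℂ] (PiLp 2 fun _ : Fin m => H) :=
  ((PiLp.continuousLinearEquiv 2 ℂ (fun _ : Fin m => H)).symm.toContinuousLinearMap) ∘L
    (ContinuousLinearMap.pi fun i => ∑ j, (a i j).comp (ContinuousLinearMap.proj j)) ∘L
    ((PiLp.continuousLinearEquiv 2 ℂ (fun _ : Fin n => H)).toContinuousLinearMap)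

/-- The bounded operator on `Hⁿ` induced by an `n × n` matrix of bounded operators. -/
def matOp {H : Type*} [NormedAddCommGroup H] [InnerProductSpace ℂ H] {n : ℕ}
    (a : Matrix (Fin n) (Fin n) (H →L[ℂ] H)) :
    (PiLp 2 fun _ : Fin n => H) →L[ℂ] (PiLp 2 fun _ : Fin n => H) :=
  matOpRect a

/-- The numerical radius of a complex `n × n` matrix, acting on `ℂⁿ`. -/
def matNumRadius {n : ℕ} (a : Matrix (Fin n) (Fin n) ℂ) : ℝ :=
  numRadius (LinearMap.toContinuousLinearMap (Matrix.toEuclideanLin a))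

/-- The identification of `M_k(M_n(ℂ))` with `M_{kn}(ℂ)`. -/
def flatten {k n : ℕ} (x : Matrix (Fin k) (Fin k) (Matrix (Fin n) (Fin n) ℂ)) :
    Matrix (Fin (k * n)) (Fin (k * n)) ℂ :=
  Matrix.of fun i j =>
    x (finProdFinEquiv.symm i).1 (finProdFinEquiv.symm j).1
      (finProdFinEquiv.symm i).2 (finProdFinEquiv.symm j).2

/-- An (abstract) numerical radius operator space: a complex vector space `X` together with a
norm `W n` on each matrix space `M_n(X)` satisfying the conditions (WI) and (WII). -/
structure NRNorm (X : Type u) [AddCommGroup X] [Module ℂ X] where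
  W : ∀ n : ℕ, Matrix (Fin n) (Fin n) X → ℝ
  nonneg : ∀ (n : ℕ) (x : Matrix (Fin n) (Fin n) X), 0 ≤ W n x
  eq_zero_iff : ∀ (n : ℕ) (x : Matrix (Fin n) (Fin n) X), W n x = 0 ↔ x = 0
  add_le : ∀ (n : ℕ) (x y : Matrix (Fin n) (Fin n) X), W n (x + y) ≤ W n x + W n y
  smul_eq : ∀ (n : ℕ) (c : ℂ) (x : Matrix (Fin n) (Fin n) X), W n (c • x) = ‖c‖ * W n x
  cond_WI : ∀ (m n : ℕ) (x : Matrix (Fin m) (Fin m) X) (y : Matrix (Fin n) (Fin n) X),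
    W (m + n) (blockDiag x y) = max (W m x) (W n y)
  cond_WII : ∀ (m n : ℕ) (α : Matrix (Fin n) (Fin m) ℂ) (x : Matrix (Fin m) (Fin m) X),
    W n (scalarMulRight (scalarMulLeft α x) αᴴ) ≤ matOpNorm α ^ 2 * W m x

/-- An (abstract) operator space: a complex vector space `X` together with a norm `O n` on each
matrix space `M_n(X)` satisfying Ruan's axioms (OI) and (OII). -/
structure OSNorm (X : Type u) [AddCommGroup X] [Module ℂ X] where
  O : ∀ n : ℕ, Matrix (Fin n) (Fin n) X → ℝ
  nonneg : ∀ (n : ℕ) (x : Matrix (Fin n) (Fin n) X), 0 ≤ O n x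
  eq_zero_iff : ∀ (n : ℕ) (x : Matrix (Fin n) (Fin n) X), O n x = 0 ↔ x = 0
  add_le : ∀ (n : ℕ) (x y : Matrix (Fin n) (Fin n) X), O n (x + y) ≤ O n x + O n y
  smul_eq : ∀ (n : ℕ) (c : ℂ) (x : Matrix (Fin n) (Fin n) X), O n (c • x) = ‖c‖ * O n x
  cond_OI : ∀ (m n : ℕ) (x : Matrix (Fin m) (Fin m) X) (y : Matrix (Fin n) (Fin n) X),
    O (m + n) (blockDiag x y) = max (O m x) (O n y)
  cond_OII : ∀ (m n : ℕ) (α : Matrix (Fin n) (Fin m) ℂ) (x : Matrix (Fin m) (Fin m) X)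
    (β : Matrix (Fin m) (Fin n) ℂ),
    O n (scalarMulRight (scalarMulLeft α x) β) ≤ matOpNorm α * O m x * matOpNorm β

/-- The completely bounded norm (valued in `[0, ∞]`) of a linear map, with respect to given
matrix norm sequences on the domain and the codomain. -/
def cbNorm {X Y : Type*} (WX : ∀ n : ℕ, Matrix (Fin n) (Fin n) X → ℝ)
    (WY : ∀ n : ℕ, Matrix (Fin n) (Fin n) Y → ℝ) (φ : X → Y) : ℝ≥0∞ :=
  ⨆ (n : ℕ) (x : Matrix (Fin n) (Fin n) X) (_ : WX n x ≤ 1),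
    ENNReal.ofReal (WY n (x.map φ))

/-- The maximal numerical radius norm affiliated with an operator space `(X, 𝒪_n)`. -/
def Wmax {X : Type u} [AddCommGroup X] [Module ℂ X] (OS : OSNorm X)
    (n : ℕ) (x : Matrix (Fin n) (Fin n) X) : ℝ :=
  sInf {t | ∃ (r : ℕ) (a : Matrix (Fin n) (Fin r) ℂ) (y : Matrix (Fin r) (Fin r) X)
      (b : Matrix (Fin r) (Fin n) ℂ),
    x = scalarMulRight (scalarMulLeft a y) b ∧ OS.O r y = 1 ∧
      t = (1 / 2) * matOpNorm (a * aᴴ + bᴴ * b)}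

/-- A complex Hilbert space together with a linear map of `X` into its bounded operators. -/
structure HilbertRep (X : Type u) [AddCommGroup X] [Module ℂ X] where
  H : Type u
  [instN : NormedAddCommGroup H]
  [instI : InnerProductSpace ℂ H]
  [instC : CompleteSpace H]
  Φ : X →ₗ[ℂ] (H →L[ℂ] H)

attribute [instance] HilbertRep.instN HilbertRep.instI HilbertRep.instC

end

/-! If `x = a y b` with `𝒪(y) = 1`, compress the corner matrix `[[0, y], [0, 0]]` by the row
`α = [a, b*]`: then `α [[0, y], [0, 0]] α* = a y b` and `α α* = a a* + b* b`, so (WII) and (OW)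
give `𝒲(x) ≤ ‖a a* + b* b‖ 𝒲([[0, y], [0, 0]]) = ½ ‖a a* + b* b‖`. -/

open Matrix

def rowBlock {n r : ℕ} (a : Matrix (Fin n) (Fin r) ℂ) (b : Matrix (Fin r) (Fin n) ℂ) :
    Matrix (Fin n) (Fin (r + r)) ℂ :=
  (fromCols a bᴴ).submatrix id finSumFinEquiv.symm

lemma rowBlock_mul_conjTranspose {n r : ℕ} (a : Matrix (Fin n) (Fin r) ℂ)
    (b : Matrix (Fin r) (Fin n) ℂ) :
    rowBlock a b * (rowBlock a b)ᴴ = a * aᴴ + bᴴ * b := by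
  rw [rowBlock, conjTranspose_submatrix, submatrix_mul_equiv,
    conjTranspose_fromCols_eq_fromRows_conjTranspose, fromCols_mul_fromRows,
    conjTranspose_conjTranspose, submatrix_id_id]

lemma scalarMulRight_scalarMulLeft_apply {X : Type*} [AddCommMonoid X] [Module ℂ X]
    {m n k p : ℕ} (α : Matrix (Fin m) (Fin n) ℂ) (z : Matrix (Fin n) (Fin k) X)
    (β : Matrix (Fin k) (Fin p) ℂ) (i : Fin m) (j : Fin p) :
    scalarMulRight (scalarMulLeft α z) β i j = ∑ l, β l j • ∑ l', α i l' • z l' l := rfl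

lemma scalarMulRight_scalarMulLeft_rowBlock_cornerBlock {X : Type*} [AddCommMonoid X]
    [Module ℂ X] {n r : ℕ}
    (a : Matrix (Fin n) (Fin r) ℂ) (b : Matrix (Fin r) (Fin n) ℂ)
    (y : Matrix (Fin r) (Fin r) X) :
    scalarMulRight (scalarMulLeft (rowBlock a b) (cornerBlock y)) (rowBlock a b)ᴴ
      = scalarMulRight (scalarMulLeft a y) b := by
  ext i j
  simp only [scalarMulRight_scalarMulLeft_apply, rowBlock, cornerBlock,
    ← finSumFinEquiv.sum_comp, Fintype.sum_sum_type, conjTranspose_apply, submatrix_apply,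
    Equiv.symm_apply_apply, id]
  simp

lemma scalarMulLeft_one {X : Type*} [AddCommMonoid X] [Module ℂ X] {n k : ℕ}
    (x : Matrix (Fin n) (Fin k) X) : scalarMulLeft 1 x = x := by
  ext i j
  simp [scalarMulLeft, one_apply, ite_smul]

lemma scalarMulRight_smul_one {X : Type*} [AddCommMonoid X] [Module ℂ X] {m n : ℕ}
    (x : Matrix (Fin m) (Fin n) X) (c : ℂ) : scalarMulRight x (c • 1) = c • x := by
  ext i j
  simp [scalarMulRight, one_apply, ite_smul]

open scoped Matrix.Norms.L2Operator in
lemma matOpNorm_mul_conjTranspose_self {m n : ℕ} (α : Matrix (Fin m) (Fin n) ℂ) :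
    matOpNorm (α * αᴴ) = matOpNorm α ^ 2 := by
  show ‖α * αᴴ‖ = ‖α‖ ^ 2
  simpa [sq, l2_opNorm_conjTranspose] using l2_opNorm_conjTranspose_mul_self αᴴ

section

variable {X : Type u} [AddCommGroup X] [Module ℂ X]

lemma Wmax_nonneg (OS : OSNorm X) (n : ℕ) (x : Matrix (Fin n) (Fin n) X) : 0 ≤ Wmax OS n x := by
  refine Real.sInf_nonneg ?_
  rintro t ⟨r, a, y, b, -, -, rfl⟩
  exact mul_nonneg (by norm_num) (norm_nonneg _)

lemma Wmax_factorizations_nonempty (OS : OSNorm X) {n : ℕ} {x : Matrix (Fin n) (Fin n) X}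
    (hx : x ≠ 0) :
    {t | ∃ (r : ℕ) (a : Matrix (Fin n) (Fin r) ℂ) (y : Matrix (Fin r) (Fin r) X)
      (b : Matrix (Fin r) (Fin n) ℂ), x = scalarMulRight (scalarMulLeft a y) b ∧
        OS.O r y = 1 ∧ t = (1 / 2) * matOpNorm (a * aᴴ + bᴴ * b)}.Nonempty := by
  set c : ℝ := OS.O n x
  have hc : c ≠ 0 := fun h => hx ((OS.eq_zero_iff n x).mp h)
  have hc' : (c : ℂ) ≠ 0 := Complex.ofReal_ne_zero.mpr hc
  refine ⟨_, n, 1, (c : ℂ)⁻¹ • x, (c : ℂ) • 1, ?_, ?_, rfl⟩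
  · rw [scalarMulLeft_one, scalarMulRight_smul_one, smul_inv_smul₀ hc']
  · rw [OS.smul_eq, norm_inv, Complex.norm_real, Real.norm_of_nonneg (OS.nonneg n x),
      inv_mul_cancel₀ hc]

lemma NRNorm.W_scalarMulRight_scalarMulLeft_le (OS : OSNorm X) (WN : NRNorm X)
    (hOW : ∀ (n : ℕ) (x : Matrix (Fin n) (Fin n) X),
      WN.W (n + n) (cornerBlock x) = (1 / 2) * OS.O n x)
    {n r : ℕ} (a : Matrix (Fin n) (Fin r) ℂ) (y : Matrix (Fin r) (Fin r) X)
    (b : Matrix (Fin r) (Fin n) ℂ) :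
    WN.W n (scalarMulRight (scalarMulLeft a y) b)
      ≤ (1 / 2) * matOpNorm (a * aᴴ + bᴴ * b) * OS.O r y := by
  have h := WN.cond_WII (r + r) n (rowBlock a b) (cornerBlock y)
  rwa [scalarMulRight_scalarMulLeft_rowBlock_cornerBlock, hOW,
    ← matOpNorm_mul_conjTranspose_self, rowBlock_mul_conjTranspose, ← mul_assoc,
    mul_comm (matOpNorm _) (1 / 2)] at h

end

/-- any numerical radius norm `𝒲` affiliated with an operator space `(X, 𝒪_n)`
(i.e. satisfying (WI), (WII) and (OW)) is dominated by `𝒲_max`. -/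
theorem stmt_10 {X : Type u} [AddCommGroup X] [Module ℂ X] (OS : OSNorm X) (WN : NRNorm X)
    (hOW : ∀ (n : ℕ) (x : Matrix (Fin n) (Fin n) X),
      WN.W (n + n) (cornerBlock x) = (1 / 2) * OS.O n x) :
    ∀ (n : ℕ) (x : Matrix (Fin n) (Fin n) X), WN.W n x ≤ Wmax OS n x := by
  intro n x
  -- For `x = 0` there may be no factorization at all (e.g. when `X = 0`), and then `sInf ∅ = 0`.
  rcases eq_or_ne x 0 with rfl | hx
  · rw [(WN.eq_zero_iff n 0).mpr rfl]
    exact Wmax_nonneg OS n 0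
  refine le_csInf (Wmax_factorizations_nonempty OS hx) ?_
  rintro t ⟨r, a, y, b, rfl, hy, rfl⟩
  simpa [hy] using WN.W_scalarMulRight_scalarMulLeft_le OS hOW a y b
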